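/- arXiv:math/0510289 — 3 statements merged into one kernel-verified Lean document; each statement's English description precedes it below -/
import Mathlib

section
/- Let X be a nilpotent element of a ℚ(q)-algebra. Then exp_q(X) · exp_{q^{-1}}(−X) = 1, where exp_q(X) = Σ_{n≥0} X^n/(n)_q! with (n)_q = 1+q^2+...+q^(2n-2), and exp_{q^{-1}} is the same expression with q replaced by q^{-1}. -/
noncomputable section

abbrev K : Type := RatFunc ℚ

def q : K := RatFunc.X

/-- The t-integer (n)_t = 1 + t² + ⋯ + t^(2n-2) for n ≥ 1, with (0)_t = 1;
used with t = q and t = q⁻¹. -/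
def qIntAt (t : K) (n : ℕ) : K := if n = 0 then 1 else ∑ k ∈ Finset.range n, t ^ (2 * k)

/-- The t-factorial (n)_t! = (1)_t (2)_t ⋯ (n)_t. -/
def qFactAt (t : K) : ℕ → K
  | 0 => 1
  | n + 1 => qFactAt t n * qIntAt t (n + 1)

/-- The truncated t-exponential exp_t(X) = Σ_{n<N} X^n/(n)_t!; for X nilpotent
with X^N = 0 this is the full series. -/
def qExpAt {A : Type*} [Ring A] [Algebra K A] (t : K) (X : A) (N : ℕ) : A :=
  ∑ n ∈ Finset.range N, (qFactAt t n)⁻¹ • X ^ n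

/-! Let `G(T) = exp_q(T) · exp_{q⁻¹}(−T)` in `ℚ(q)⟦T⟧`. Splitting `(s+1)_q = (i)_q + q^{2i} (j)_q`
over `i + j = s + 1` and using `(j)_q = q^{2(j-1)} (j)_{q⁻¹}`, the coefficients of `G` satisfy
`(s+1)_q g_{s+1} = (1 - q^{2s}) g_s`; since `g_0 = 1` and the factor vanishes at `s = 0`, `G = 1`.
If `X ^ N = 0`, evaluating degree-`< N` truncations at `X` is multiplicative, which transfers
`G = 1` to `X`. -/

open Finset

-- Unlike `qIntAt`, `qNat t 0 = 0`, so that `qNat_add` needs no side conditions.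
def qNat (t : K) (n : ℕ) : K := ∑ k ∈ range n, t ^ (2 * k)

section QNat

variable (t : K)

@[simp]
lemma qNat_zero : qNat t 0 = 0 := sum_range_zero _

lemma qIntAt_eq_qNat {n : ℕ} (hn : n ≠ 0) : qIntAt t n = qNat t n := if_neg hn

lemma qFactAt_succ (n : ℕ) : qFactAt t (n + 1) = qFactAt t n * qNat t (n + 1) := by
  rw [qFactAt, qIntAt_eq_qNat t n.succ_ne_zero]

lemma qNat_add (m n : ℕ) : qNat t (m + n) = qNat t m + t ^ (2 * m) * qNat t n := by
  simp only [qNat, sum_range_add, mul_sum, ← pow_add, mul_add]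

lemma qNat_mul_inv_qFactAt_succ {n : ℕ} (h : qNat t (n + 1) ≠ 0) :
    qNat t (n + 1) * (qFactAt t (n + 1))⁻¹ = (qFactAt t n)⁻¹ := by
  rw [qFactAt_succ, mul_inv, mul_left_comm, mul_inv_cancel₀ h, mul_one]

end QNat

lemma qNat_succ_eq_pow_mul_qNat_inv {t : K} (ht : t ≠ 0) (n : ℕ) :
    qNat t (n + 1) = t ^ (2 * n) * qNat t⁻¹ (n + 1) := by
  rw [qNat, qNat, mul_sum, ← sum_range_reflect]
  refine sum_congr rfl fun k hk => ?_
  have hkn : 2 * n = 2 * (n + 1 - 1 - k) + 2 * k := by grind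
  rw [hkn, pow_add, inv_pow, mul_assoc, mul_inv_cancel₀ (pow_ne_zero _ ht), mul_one]

lemma q_ne_zero : q ≠ 0 := RatFunc.X_ne_zero

lemma qNat_q_succ_ne_zero (n : ℕ) : qNat q (n + 1) ≠ 0 := by
  have hpoly : ∑ k ∈ range (n + 1), (Polynomial.X : Polynomial ℚ) ^ (2 * k) ≠ 0 := fun h => by
    have h1 := congrArg (Polynomial.eval 1) h
    simp only [Polynomial.eval_finsetSum, Polynomial.eval_pow, Polynomial.eval_X, one_pow,
      sum_const, card_range, nsmul_eq_mul, mul_one, Polynomial.eval_zero] at h1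
    exact n.succ_ne_zero (Nat.cast_eq_zero.mp h1)
  simpa [qNat, q, map_sum, RatFunc.algebraMap_X] using
    (map_ne_zero_iff _ (IsFractionRing.injective (Polynomial ℚ) K)).mpr hpoly

section TruncatedEvaluation

open Polynomial

variable {R A : Type*} [CommRing R] [Semiring A] [Algebra R A]

lemma aeval_trunc_eq_sum_range (x : A) (N : ℕ) (f : PowerSeries R) :
    aeval x (PowerSeries.trunc N f) = ∑ n ∈ range N, PowerSeries.coeff n f • x ^ n := by
  simp only [aeval_def, PowerSeries.eval₂_trunc_eq_sum_range, Algebra.smul_def]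

lemma aeval_trunc_of_pow_eq_zero {x : A} {N : ℕ} (hx : x ^ N = 0) (p : R[X]) :
    aeval x (PowerSeries.trunc N (p : PowerSeries R)) = aeval x p := by
  obtain ⟨r, hr⟩ : X ^ N ∣ p - PowerSeries.trunc N (p : PowerSeries R) :=
    X_pow_dvd_iff.mpr fun d hd => by simp [PowerSeries.coeff_trunc, hd]
  conv_rhs => rw [sub_eq_iff_eq_add'.mp hr]
  rw [map_add, map_mul, map_pow, aeval_X, hx, zero_mul, add_zero]

lemma aeval_trunc_mul_of_pow_eq_zero {x : A} {N : ℕ} (hx : x ^ N = 0) (f g : PowerSeries R) :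
    aeval x (PowerSeries.trunc N (f * g)) =
      aeval x (PowerSeries.trunc N f) * aeval x (PowerSeries.trunc N g) := by
  rw [← PowerSeries.trunc_trunc_mul_trunc, ← Polynomial.coe_mul, aeval_trunc_of_pow_eq_zero hx,
    map_mul]

end TruncatedEvaluation

section QExpSeries

open PowerSeries

def qExpSeries (t : K) : PowerSeries K := mk fun n => (qFactAt t n)⁻¹

lemma qExpAt_eq_aeval_trunc {A : Type*} [Ring A] [Algebra K A] (t : K) (X : A) (N : ℕ) :
    qExpAt t X N = Polynomial.aeval X (trunc N (qExpSeries t)) := by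
  simp [qExpAt, aeval_trunc_eq_sum_range, qExpSeries]

lemma qExpAt_neg_eq_aeval_trunc_rescale {A : Type*} [Ring A] [Algebra K A] (t : K) (X : A)
    (N : ℕ) : qExpAt t (-X) N = Polynomial.aeval X (trunc N (rescale (-1) (qExpSeries t))) := by
  simp only [qExpAt, aeval_trunc_eq_sum_range, qExpSeries, coeff_rescale, coeff_mk]
  refine sum_congr rfl fun n _ => ?_
  rw [← neg_one_smul K X, smul_pow, smul_smul, mul_comm]

lemma coeff_succ_qExpSeries_mul_rescale_qExpSeries_inv {t : K} (ht : t ≠ 0)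
    (hqNat : ∀ n, qNat t (n + 1) ≠ 0) (s : ℕ) :
    qNat t (s + 1) * coeff (s + 1) (qExpSeries t * rescale (-1) (qExpSeries t⁻¹)) =
      (1 - t ^ (2 * s)) * coeff s (qExpSeries t * rescale (-1) (qExpSeries t⁻¹)) := by
  set a : ℕ → K := fun n => (qFactAt t n)⁻¹
  set b : ℕ → K := fun n => (-1) ^ n * (qFactAt t⁻¹ n)⁻¹
  have coeff_eq (n : ℕ) : coeff n (qExpSeries t * rescale (-1) (qExpSeries t⁻¹)) =
      ∑ p ∈ antidiagonal n, a p.1 * b p.2 := by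
    simp [coeff_mul, coeff_rescale, qExpSeries, a, b]
  have ha (i : ℕ) : qNat t (i + 1) * a (i + 1) = a i := qNat_mul_inv_qFactAt_succ t (hqNat i)
  have hb (j : ℕ) : qNat t (j + 1) * b (j + 1) = -t ^ (2 * j) * b j := by
    have hinv : qNat t⁻¹ (j + 1) ≠ 0 := fun h => hqNat j (by
      rw [qNat_succ_eq_pow_mul_qNat_inv ht, h, mul_zero])
    simp only [b]
    rw [qNat_succ_eq_pow_mul_qNat_inv ht, ← qNat_mul_inv_qFactAt_succ t⁻¹ hinv]
    ring
  rw [coeff_eq, coeff_eq, mul_sum]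
  calc ∑ p ∈ antidiagonal (s + 1), qNat t (s + 1) * (a p.1 * b p.2)
      = ∑ p ∈ antidiagonal (s + 1),
          (qNat t p.1 * a p.1 * b p.2 + t ^ (2 * p.1) * a p.1 * (qNat t p.2 * b p.2)) := by
        refine sum_congr rfl fun p hp => ?_
        rw [← mem_antidiagonal.mp hp, qNat_add]
        ring
    _ = ∑ p ∈ antidiagonal s, a p.1 * b p.2 +
          ∑ p ∈ antidiagonal s, t ^ (2 * p.1) * a p.1 * (-t ^ (2 * p.2) * b p.2) := by
        rw [sum_add_distrib, Nat.sum_antidiagonal_succ, Nat.sum_antidiagonal_succ']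
        simp only [qNat_zero, ha, hb]
        ring
    _ = (1 - t ^ (2 * s)) * ∑ p ∈ antidiagonal s, a p.1 * b p.2 := by
        rw [sub_mul, one_mul, sub_eq_add_neg, neg_mul_eq_neg_mul, mul_sum]
        congr 1
        refine sum_congr rfl fun p hp => ?_
        rw [← mem_antidiagonal.mp hp, mul_add, pow_add]
        ring

lemma qExpSeries_mul_rescale_qExpSeries_inv {t : K} (ht : t ≠ 0)
    (hqNat : ∀ n, qNat t (n + 1) ≠ 0) :
    qExpSeries t * rescale (-1) (qExpSeries t⁻¹) = 1 := by
  have coeff_succ (s : ℕ) :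
      coeff (s + 1) (qExpSeries t * rescale (-1) (qExpSeries t⁻¹)) = 0 := by
    induction s with
    | zero => simpa [hqNat 0] using coeff_succ_qExpSeries_mul_rescale_qExpSeries_inv ht hqNat 0
    | succ s ih => simpa [ih, hqNat (s + 1)] using
        coeff_succ_qExpSeries_mul_rescale_qExpSeries_inv ht hqNat (s + 1)
  ext (_ | s)
  · simp [coeff_mul, coeff_rescale, qExpSeries, qFactAt]
  · simp [coeff_succ]

end QExpSeries

/-- For a nilpotent element X of a ℚ(q)-algebra, exp_q(X) · exp_{q⁻¹}(−X) = 1. -/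
theorem qExp_mul_qExpInv {A : Type*} [Ring A] [Algebra K A] (X : A) (N : ℕ)
    (hX : X ^ N = 0) :
    qExpAt q X N * qExpAt q⁻¹ (-X) N = 1 := by
  cases N with
  | zero => simpa [qExpAt] using hX.symm
  | succ N =>
    rw [qExpAt_eq_aeval_trunc, qExpAt_neg_eq_aeval_trunc_rescale,
      ← aeval_trunc_mul_of_pow_eq_zero hX,
      qExpSeries_mul_rescale_qExpSeries_inv q_ne_zero qNat_q_succ_ne_zero,
      PowerSeries.trunc_one, map_one]
end
end

section
/- In the one-parameter 2×2 quantum matrix algebra O over ℚ(q) (relations Z22·Z11 = Z11·Z22 + (q^2−1)Z12·Z21, Z22·Z21 = Z21·Z22, Z12·Z11 = Z11·Z12, Z22·Z12 = q^2 Z12·Z22, Z21·Z12 = q^2 Z12·Z21, Z21·Z11 = q^2 Z11·Z21), for any matrix A = (a_{ij}) ∈ M_2(ℤ≥0), the monomial Z^A = Z11^{a11} Z12^{a12} Z21^{a21} Z22^{a22} satisfies Z^A · det_q = q^{2(a21−a12)} det_q · Z^A, where det_q = Z11·Z22 − Z12·Z21. -/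
noncomputable section

/-- Generators of the 2×2 quantum matrix algebra. -/
inductive Gen : Type | z11 | z12 | z21 | z22

open Gen

/-- The generators viewed in the free algebra. -/
def ι : Gen → FreeAlgebra K Gen := FreeAlgebra.ι K

/-- The defining relations of the one-parameter (Dipper–Donkin) 2×2 quantum
matrix algebra. -/
inductive QRel : FreeAlgebra K Gen → FreeAlgebra K Gen → Prop
  | r1 : QRel (ι z22 * ι z11) (ι z11 * ι z22 + (q ^ 2 - 1) • (ι z12 * ι z21))
  | r2 : QRel (ι z22 * ι z21) (ι z21 * ι z22)
  | r3 : QRel (ι z12 * ι z11) (ι z11 * ι z12)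
  | r4 : QRel (ι z22 * ι z12) ((q ^ 2) • (ι z12 * ι z22))
  | r5 : QRel (ι z21 * ι z12) ((q ^ 2) • (ι z12 * ι z21))
  | r6 : QRel (ι z21 * ι z11) ((q ^ 2) • (ι z11 * ι z21))

/-- The one-parameter 2×2 quantum matrix algebra O over ℚ(q). -/
abbrev O : Type := RingQuot QRel

/-- The images of the generators in O. -/
def Z (g : Gen) : O := RingQuot.mkAlgHom K QRel (ι g)

/-- The quantum determinant det_q = Z11·Z22 − Z12·Z21. -/
def detq : O := Z z11 * Z z22 - Z z12 * Z z21


lemma Zrel {x y : FreeAlgebra K Gen} (h : QRel x y) :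
    RingQuot.mkAlgHom K QRel x = RingQuot.mkAlgHom K QRel y :=
  RingQuot.mkAlgHom_rel K h

lemma r1' : Z z22 * Z z11 = Z z11 * Z z22 + (q ^ 2 - 1) • (Z z12 * Z z21) := by
  simpa [Z, map_mul, map_add, map_smul] using Zrel QRel.r1

lemma r2' : Z z22 * Z z21 = Z z21 * Z z22 := by
  simpa [Z, map_mul] using Zrel QRel.r2

lemma r3' : Z z12 * Z z11 = Z z11 * Z z12 := by
  simpa [Z, map_mul] using Zrel QRel.r3

lemma r4' : Z z22 * Z z12 = (q ^ 2) • (Z z12 * Z z22) := by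
  simpa [Z, map_mul, map_smul] using Zrel QRel.r4

lemma r5' : Z z21 * Z z12 = (q ^ 2) • (Z z12 * Z z21) := by
  simpa [Z, map_mul, map_smul] using Zrel QRel.r5

lemma r6' : Z z21 * Z z11 = (q ^ 2) • (Z z11 * Z z21) := by
  simpa [Z, map_mul, map_smul] using Zrel QRel.r6

lemma detq_z11 : Z z11 * detq = detq * Z z11 := by
  have h1 := r1'
  have h3 := r3'
  have h6 := r6'
  simp only [detq, mul_sub, sub_mul]
  rw [mul_assoc (Z z11) (Z z22), h1, mul_assoc (Z z12) (Z z21), h6]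
  simp only [mul_add, mul_smul_comm, smul_mul_assoc, ← mul_assoc, h3]
  simp only [Algebra.smul_def, map_sub, map_one]
  noncomm_ring
  rw [smul_mul_assoc, one_mul]

lemma detq_z22 : Z z22 * detq = detq * Z z22 := by
  simp only [detq, mul_sub, sub_mul]
  rw [← mul_assoc (Z z22) (Z z11), r1', ← mul_assoc (Z z22) (Z z12), r4']
  simp only [add_mul, mul_add, mul_smul_comm, smul_mul_assoc, mul_assoc, r2']
  simp only [Algebra.smul_def, map_sub, map_one]
  noncomm_ring
  rw [smul_mul_assoc, one_mul]

lemma detq_z21 : Z z21 * detq = (q ^ 2) • (detq * Z z21) := by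
  simp only [detq, mul_sub, sub_mul]
  rw [← mul_assoc (Z z21) (Z z11), r6', ← mul_assoc (Z z21) (Z z12), r5']
  simp only [smul_mul_assoc, smul_sub, mul_assoc, ← r2']

lemma detq_z12 : Z z12 * detq = ((q ^ 2)⁻¹) • (detq * Z z12) := by
  have hq : (q : K) ^ 2 ≠ 0 := pow_ne_zero _ (by simpa [q] using RatFunc.X_ne_zero (K := ℚ))
  rw [eq_comm, inv_smul_eq_iff₀ hq, eq_comm]
  simp only [detq, mul_sub, sub_mul, smul_sub]
  rw [mul_assoc (Z z11) (Z z22), r4', mul_assoc (Z z12) (Z z21), r5']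
  simp only [mul_smul_comm, smul_mul_assoc, ← mul_assoc, r3']

lemma swap_mul {x y d : O} {c c' : K} (hx : x * d = c • (d * x))
    (hy : y * d = c' • (d * y)) : (x * y) * d = (c * c') • (d * (x * y)) := by
  calc (x * y) * d = x * (y * d) := mul_assoc ..
    _ = c' • (x * d * y) := by rw [hy, mul_smul_comm, mul_assoc]
    _ = c' • ((c • (d * x)) * y) := by rw [hx]
    _ = (c * c') • (d * (x * y)) := by
        rw [smul_mul_assoc, smul_smul, mul_comm c' c, mul_assoc]

lemma swap_pow {x d : O} {c : K} (hx : x * d = c • (d * x)) (n : ℕ) :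
    x ^ n * d = (c ^ n) • (d * x ^ n) := by
  induction n with
  | zero => simp
  | succ n ih =>
      rw [pow_succ, pow_succ, swap_mul ih hx]

/-- For A = (a11, a12, a21, a22) ∈ M₂(ℤ≥0), the monomial
Z^A = Z11^{a11} Z12^{a12} Z21^{a21} Z22^{a22} satisfies
Z^A · det_q = q^{2(a21−a12)} det_q · Z^A. -/
theorem monomial_detq_commutation (a11 a12 a21 a22 : ℕ) :
    (Z z11 ^ a11 * Z z12 ^ a12 * Z z21 ^ a21 * Z z22 ^ a22) * detq
      = (q ^ (2 * ((a21 : ℤ) - (a12 : ℤ)))) •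
        (detq * (Z z11 ^ a11 * Z z12 ^ a12 * Z z21 ^ a21 * Z z22 ^ a22)) := by
  have hq : (q : K) ≠ 0 := by simpa [q] using RatFunc.X_ne_zero (K := ℚ)
  have h11 := swap_pow (x := Z z11) (d := detq) (c := (1 : K)) (by rw [one_smul]; exact detq_z11) a11
  have h12 := swap_pow detq_z12 a12
  have h21 := swap_pow detq_z21 a21
  have h22 := swap_pow (x := Z z22) (d := detq) (c := (1 : K)) (by rw [one_smul]; exact detq_z22) a22
  have hM := swap_mul (swap_mul (swap_mul h11 h12) h21) h22
  have key : (1 : K) ^ a11 * ((q ^ 2)⁻¹) ^ a12 * (q ^ 2) ^ a21 * (1 : K) ^ a22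
      = q ^ (2 * ((a21 : ℤ) - (a12 : ℤ))) := by
    rw [one_pow, one_pow, one_mul, mul_one, inv_pow, ← pow_mul, ← pow_mul,
        ← zpow_natCast q (2 * a12), ← zpow_natCast q (2 * a21), ← zpow_neg,
        ← zpow_add₀ hq]
    congr 1
    push_cast
    ring
  rw [hM, key]
end
end

section
/- Let V be a free module over ℤ[Γ] for a totally ordered abelian group Γ (ordering compatible with the group structure), with basis {t_i | i ∈ I} indexed by a partially ordered set I in which every downward interval is finite. Let bar : V → V be an additive involution-compatible map satisfying bar(a·v) = ā·bar(v) for a ∈ ℤ[Γ] (where ā inverts group elements) and bar(t_i) = Σ_j a_{ij} t_j with a_{ii} = 1 and a_{ij} ≠ 0 only if j ≤ i, and assume bar is an involution. Then for each i ∈ I there is a unique element b_i ∈ V with bar(b_i) = b_i and b_i = Σ_{j ≤ i} h_{ij} t_j, where h_{ii} = 1 and h_{ij} ∈ ℤ[Γ_+] for j < i (Γ_+ the strictly positive elements); moreover {b_i} is a basis of V. -/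
/-!
Finiteness of the intervals `Iic i` makes `<` well founded on `I`, so `b i` can be built by
induction. If the `b j` with `j < i` are already found, `bar (t i) - t i` lies strictly below
`i`, so it is a combination `∑ r j • b j`; applying `bar` shows `bar (r j) = - r j`. Splitting
`r j = p j - bar (p j)` with `p j ∈ ℤ[Γ₊]` (take the part of `r j` on `Γ₊`), the element
`b i = t i + ∑ p j • b j` is bar-invariant.
Uniqueness: the difference of two solutions is bar-invariant, and its coefficient at a maximal
index `j` is then bar-invariant and in `ℤ[Γ₊]`, hence zero because `ℤ[Γ₊] ∩ ℤ[Γ₋] = 0`.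
Unitriangularity makes the `b i` a basis.
-/

noncomputable section

open MonoidAlgebra

open Set Submodule

namespace Module.Basis

variable {R I V : Type*} [Ring R] [PartialOrder I] [AddCommGroup V] [Module R V]
  (t : Basis I R V)

structure IsUnitriangularAt (i : I) (v : V) : Prop where
  repr_self : t.repr v i = 1
  le_of_repr_ne_zero : ∀ j, t.repr v j ≠ 0 → j ≤ i

def IsUnitriangular (c : I → V) : Prop :=
  ∀ i, t.IsUnitriangularAt i (c i)

variable {t}

theorem isUnitriangularAt_self (i : I) : t.IsUnitriangularAt i (t i) where
  repr_self := by simp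
  le_of_repr_ne_zero j hj := by
    rw [repr_self, Finsupp.single_apply_ne_zero] at hj
    exact hj.1.le

theorem IsUnitriangularAt.repr_eq_zero_of_not_le {i j : I} {v : V} (hv : t.IsUnitriangularAt i v)
    (hji : ¬ j ≤ i) : t.repr v j = 0 :=
  not_not.1 (mt (hv.le_of_repr_ne_zero j) hji)

theorem IsUnitriangularAt.sub_mem_span_image_Iio {i : I} {v : V} (hv : t.IsUnitriangularAt i v) :
    v - t i ∈ span R (t '' Iio i) := by
  rw [t.mem_span_image]
  intro k hk
  rw [Finset.mem_coe, Finsupp.mem_support_iff, map_sub, Finsupp.sub_apply, t.repr_self] at hk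
  rcases eq_or_ne k i with rfl | hki
  · simp [hv.repr_self] at hk
  · rw [Finsupp.single_eq_of_ne hki, sub_zero] at hk
    exact lt_of_le_of_ne (hv.le_of_repr_ne_zero k hk) hki

namespace IsUnitriangular

variable {c : I → V} (hc : t.IsUnitriangular c)
include hc

theorem repr_sum_smul_of_maximal {s : Finset I} {a : I → R} {j : I} (hjs : j ∈ s)
    (hj : ∀ k ∈ s, a k ≠ 0 → ¬ j < k) : t.repr (∑ k ∈ s, a k • c k) j = a j := by
  rw [map_sum, Finsupp.finsetSum_apply, Finset.sum_eq_single_of_mem j hjs]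
  · simp [(hc j).repr_self]
  · intro k hks hkj
    by_cases hak : a k = 0
    · simp [hak]
    · have hjk : ¬ j ≤ k := fun h => hj k hks hak (lt_of_le_of_ne h hkj.symm)
      simp [(hc k).repr_eq_zero_of_not_le hjk]

theorem linearIndependent : LinearIndependent R c := by
  classical
  refine linearIndependent_iff'.2 fun s a hsum j hjs => ?_
  by_contra hj
  obtain ⟨m, hm⟩ := Finset.exists_maximal (s := s.filter (a · ≠ 0)) ⟨j, by simp [hjs, hj]⟩
  have hms := Finset.mem_filter.1 hm.prop
  have := hc.repr_sum_smul_of_maximal hms.1 fun k hks hak =>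
    hm.not_gt (Finset.mem_filter.2 ⟨hks, hak⟩)
  rw [hsum, map_zero, Finsupp.zero_apply] at this
  exact hms.2 this.symm

theorem mem_span_image_Iic [WellFoundedLT I] (i : I) : t i ∈ span R (c '' Iic i) := by
  induction i using WellFoundedLT.induction with
  | _ i ih =>
  have hle : span R (t '' Iio i) ≤ span R (c '' Iic i) := span_le.2 <| by
    rintro _ ⟨k, hk, rfl⟩
    exact span_mono (image_mono (Iic_subset_Iic.2 hk.le)) (ih k hk)
  simpa using
    sub_mem (subset_span (mem_image_of_mem c self_mem_Iic)) (hle (hc i).sub_mem_span_image_Iio)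

theorem span_image_le [WellFoundedLT I] {s : Set I} (hs : IsLowerSet s) :
    span R (t '' s) ≤ span R (c '' s) :=
  span_le.2 <| by
    rintro _ ⟨k, hk, rfl⟩
    exact span_mono (image_mono fun j hj => hs hj hk) (hc.mem_span_image_Iic k)

def basis [WellFoundedLT I] : Basis I R V :=
  Basis.mk hc.linearIndependent <| by
    simpa [t.span_eq] using hc.span_image_le isLowerSet_univ

theorem coe_basis [WellFoundedLT I] : ⇑hc.basis = c :=
  Basis.coe_mk _ _

end IsUnitriangular

variable {σ : R →+* R} (β : V →ₛₗ[σ] V)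

theorem repr_map_of_maximal (hβ : t.IsUnitriangular (β ∘ t)) {x : V} {j : I}
    (hj : Maximal (· ∈ (t.repr x).support) j) : t.repr (β x) j = σ (t.repr x j) := by
  have hx : β x = ∑ k ∈ (t.repr x).support, σ (t.repr x k) • (β ∘ t) k := by
    conv_lhs => rw [← t.linearCombination_repr x]
    simp [Finsupp.linearCombination_apply, Finsupp.sum, map_sum, map_smulₛₗ]
  rw [hx, hβ.repr_sum_smul_of_maximal hj.prop fun k hk _ => hj.not_gt hk]

structure IsCanonicalAt (P : Set R) (i : I) (v : V) : Prop extends t.IsUnitriangularAt i v where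
  map_eq : β v = v
  repr_mem : ∀ j < i, t.repr v j ∈ P

variable {β}

theorem IsCanonicalAt.unique (hβ : t.IsUnitriangular (β ∘ t)) {P : NonUnitalSubring R}
    (hP : ∀ p ∈ P, σ p = p → p = 0) {i : I} {v w : V} (hv : t.IsCanonicalAt β P i v)
    (hw : t.IsCanonicalAt β P i w) : v = w := by
  rw [← sub_eq_zero, ← t.repr.map_eq_zero_iff]
  by_contra hne
  obtain ⟨j, hj⟩ := Finset.exists_maximal (Finsupp.support_nonempty_iff.2 hne)
  have hdj : t.repr (v - w) j ≠ 0 := Finsupp.mem_support_iff.1 hj.prop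
  have hji : j < i := by
    refine lt_of_le_of_ne (not_not.1 fun h => hdj ?_) fun h => hdj ?_
    · simp [hv.repr_eq_zero_of_not_le h, hw.repr_eq_zero_of_not_le h]
    · simp [h, hv.repr_self, hw.repr_self]
  have hfix : σ (t.repr (v - w) j) = t.repr (v - w) j := by
    rw [← repr_map_of_maximal β hβ hj, map_sub, hv.map_eq, hw.map_eq]
  refine hdj (hP _ ?_ hfix)
  simpa using sub_mem (hv.repr_mem j hji) (hw.repr_mem j hji)

theorem isCanonicalAt_add_sum {P : NonUnitalSubring R} {i : I} {s : Finset I} {c : I → V}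
    {p : I → R} (hs : ∀ j ∈ s, j < i) (hc : ∀ j ∈ s, t.IsCanonicalAt β P j (c j))
    (hp : ∀ j ∈ s, p j ∈ P) (hfix : β (t i + ∑ j ∈ s, p j • c j) = t i + ∑ j ∈ s, p j • c j) :
    t.IsCanonicalAt β P i (t i + ∑ j ∈ s, p j • c j) := by
  have hrepr : ∀ k, t.repr (t i + ∑ j ∈ s, p j • c j) k =
      Finsupp.single i 1 k + ∑ j ∈ s, p j * t.repr (c j) k := by
    simp
  refine ⟨⟨?_, fun k hk => ?_⟩, hfix, fun k hk => ?_⟩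
  · rw [hrepr, Finsupp.single_eq_same, add_eq_left]
    exact Finset.sum_eq_zero fun j hj => by
      rw [(hc j hj).repr_eq_zero_of_not_le (hs j hj).not_ge, mul_zero]
  · rcases eq_or_ne k i with rfl | hki
    · exact le_rfl
    rw [hrepr, Finsupp.single_eq_of_ne hki, zero_add] at hk
    obtain ⟨j, hj, hjk⟩ := Finset.exists_ne_zero_of_sum_ne_zero hk
    exact ((hc j hj).le_of_repr_ne_zero k (right_ne_zero_of_mul hjk)).trans (hs j hj).le
  · rw [hrepr, Finsupp.single_eq_of_ne hk.ne, zero_add]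
    refine sum_mem fun j hj => ?_
    rcases eq_or_ne k j with rfl | hkj
    · simpa [(hc k hj).repr_self] using hp k hj
    by_cases h : k ≤ j
    · exact mul_mem (hp j hj) ((hc j hj).repr_mem k (lt_of_le_of_ne h hkj))
    · simp [(hc j hj).repr_eq_zero_of_not_le h]

theorem exists_isCanonicalAt_of_lt [WellFoundedLT I] (hβ : t.IsUnitriangular (β ∘ t))
    (hβ_inv : ∀ v, β (β v) = v) {P : NonUnitalSubring R} (hP : ∀ r, σ r = -r → ∃ p ∈ P, p - σ p = r)
    {i : I} {c : I → V} (hc : t.IsUnitriangular c) (hci : ∀ j < i, t.IsCanonicalAt β P j (c j)) :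
    ∃ v, t.IsCanonicalAt β P i v := by
  obtain ⟨r, hr, hrw⟩ := (Finsupp.mem_span_image_iff_linearCombination R).1
    (hc.span_image_le (isLowerSet_Iio i) (hβ i).sub_mem_span_image_Iio)
  rw [Finsupp.linearCombination_apply, Finsupp.sum, Function.comp_apply] at hrw
  set s := r.support
  have hs : ∀ j ∈ s, j < i := fun j hj => hr hj
  have hβsum : ∀ a : I → R, β (∑ j ∈ s, a j • c j) = ∑ j ∈ s, σ (a j) • c j := fun a => by
    simp only [map_sum, map_smulₛₗ]
    exact Finset.sum_congr rfl fun j hj => by rw [(hci j (hs j hj)).map_eq]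
  have hanti : ∀ j ∈ s, σ (r j) = -r j := by
    refine fun j hj => eq_neg_of_add_eq_zero_left <|
      linearIndependent_iff'.1 hc.linearIndependent s (fun j => σ (r j) + r j) ?_ j hj
    simp only [add_smul, Finset.sum_add_distrib, ← hβsum, hrw, map_sub, hβ_inv]
    abel
  choose! p hpP hp using fun j (hj : j ∈ s) => hP (r j) (hanti j hj)
  refine ⟨_, isCanonicalAt_add_sum hs (fun j hj => hci j (hs j hj)) hpP ?_⟩
  calc β (t i + ∑ j ∈ s, p j • c j) = t i + ∑ j ∈ s, (r j + σ (p j)) • c j := by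
        simp only [map_add, hβsum, add_smul, Finset.sum_add_distrib, hrw]
        abel
    _ = t i + ∑ j ∈ s, p j • c j := by
        refine congrArg _ (Finset.sum_congr rfl fun j hj => ?_)
        rw [← hp j hj, sub_add_cancel]

theorem exists_isCanonicalAt [WellFoundedLT I] (hβ : t.IsUnitriangular (β ∘ t))
    (hβ_inv : ∀ v, β (β v) = v) {P : NonUnitalSubring R} (hP : ∀ r, σ r = -r → ∃ p ∈ P, p - σ p = r)
    (i : I) : ∃ v, t.IsCanonicalAt β P i v := by
  classical
  induction i using WellFoundedLT.induction with
  | _ i ih =>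
  choose b hb using ih
  let c : I → V := fun j => if h : j < i then b j h else t j
  refine exists_isCanonicalAt_of_lt hβ hβ_inv hP (c := c) (fun j => ?_) fun j h => by
    simpa [c, h] using hb j h
  by_cases h : j < i
  · simpa [c, h] using (hb j h).toIsUnitriangularAt
  · simpa [c, h] using isUnitriangularAt_self j

end Module.Basis

theorem wellFoundedLT_of_finite_Iic {I : Type*} [Preorder I] (h : ∀ i : I, (Iic i).Finite) :
    WellFoundedLT I :=
  StrictMono.wellFoundedLT (f := fun i => (Iic i).ncard) fun _ i hji =>
    ncard_lt_ncard (Iic_ssubset_Iic.2 hji) (h i)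

namespace MonoidAlgebra

variable {Γ : Type*}

/-- `ℤ[Γ₊]`. -/
def posSubring [Monoid Γ] [Preorder Γ] [MulLeftStrictMono Γ] :
    NonUnitalSubring (MonoidAlgebra ℤ Γ) where
  carrier := {f | ∀ γ ∈ f.coeff.support, 1 < γ}
  add_mem' {f g} hf hg γ hγ := by
    classical
    rw [coeff_add] at hγ
    exact (Finset.mem_union.1 (Finsupp.support_add hγ)).elim (hf γ) (hg γ)
  zero_mem' := by simp
  mul_mem' {f g} hf hg γ hγ := by
    classical
    obtain ⟨a, ha, b, hb, rfl⟩ := Finset.mem_mul.1 (support_coeff_mul_subset f g hγ)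
    exact one_lt_mul' (hf a ha) (hg b hb)
  neg_mem' {f} hf γ hγ := hf γ (by simpa using hγ)

section Group

variable [Group Γ] {σ : MonoidAlgebra ℤ Γ →+* MonoidAlgebra ℤ Γ}
  (hσ : ∀ γ : Γ, σ (of ℤ Γ γ) = of ℤ Γ γ⁻¹)
include hσ

theorem coeff_map_eq_coeff_inv (f : MonoidAlgebra ℤ Γ) (δ : Γ) : (σ f).coeff δ = f.coeff δ⁻¹ := by
  induction f using MonoidAlgebra.induction_linear with
  | zero => simp
  | add f g hf hg => simp [hf, hg]
  | single γ n =>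
    classical
    have : single γ n = n • of ℤ Γ γ := by simp [of_apply, smul_single]
    rw [this, map_zsmul, hσ]
    simp only [of_apply, coeff_smul, coeff_single, Finsupp.smul_apply, Finsupp.single_apply,
      inv_eq_iff_eq_inv]

theorem eq_zero_of_mem_posSubring_of_map_eq [Preorder Γ] [MulLeftStrictMono Γ]
    {f : MonoidAlgebra ℤ Γ} (hf : f ∈ posSubring) (hfix : σ f = f) : f = 0 := by
  by_contra hne
  obtain ⟨γ, hγ⟩ := Finsupp.support_nonempty_iff.2 (mt coeff_eq_zero.1 hne)
  have hγ' : γ⁻¹ ∈ f.coeff.support := by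
    rw [Finsupp.mem_support_iff, ← coeff_map_eq_coeff_inv hσ, hfix]
    exact Finsupp.mem_support_iff.1 hγ
  exact (hf γ hγ).not_gt (one_lt_inv'.1 (hf _ hγ'))

theorem exists_mem_posSubring_sub_map_eq [LinearOrder Γ] [MulLeftStrictMono Γ]
    {f : MonoidAlgebra ℤ Γ} (hf : σ f = -f) : ∃ p ∈ posSubring, p - σ p = f := by
  classical
  have hanti : ∀ δ, f.coeff δ⁻¹ = -f.coeff δ := fun δ => by
    rw [← coeff_map_eq_coeff_inv hσ, hf, coeff_neg, Finsupp.neg_apply]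
  refine ⟨ofCoeff (f.coeff.filter (1 < ·)), fun γ hγ => ?_, ?_⟩
  · exact (by simpa using hγ : f.coeff γ ≠ 0 ∧ 1 < γ).2
  ext δ
  rw [coeff_sub, Finsupp.sub_apply, coeff_map_eq_coeff_inv hσ, coeff_ofCoeff, Finsupp.filter_apply,
    Finsupp.filter_apply]
  rcases lt_trichotomy 1 δ with h | rfl | h
  · simp [h, h.not_gt]
  · have := hanti 1
    simp only [inv_one, lt_self_iff_false, if_false, sub_self] at this ⊢
    omega
  · simp [h.not_gt, one_lt_inv'.2 h, hanti]

end Group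

end MonoidAlgebra

/-- Lusztig's elementary lemma.  Let Γ be a totally ordered abelian group (order
compatible with multiplication), R = ℤ[Γ] its group ring with bar-involution
induced by γ ↦ γ⁻¹, and V a free R-module with basis {t_i | i ∈ I} indexed by a
poset I with finite downward intervals.  If bar : V → V is additive, semilinear
(bar(a•v) = ā•bar(v)), an involution, and unitriangular with respect to the
basis (bar(t_i) = Σ_{j ≤ i} a_{ij} t_j with a_{ii} = 1), then for each i there
is a unique bar-invariant b_i = Σ_{j ≤ i} h_{ij} t_j with h_{ii} = 1 and
h_{ij} ∈ ℤ[Γ₊] for j < i; moreover the b_i form a basis of V. -/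
theorem lusztig_elementary_lemma
    {Γ : Type*} [CommGroup Γ] [LinearOrder Γ]
    [CovariantClass Γ Γ (· * ·) (· < ·)]
    {I : Type*} [PartialOrder I] (hfin : ∀ i : I, {j | j ≤ i}.Finite)
    {V : Type*} [AddCommGroup V] [Module (MonoidAlgebra ℤ Γ) V]
    (t : Module.Basis I (MonoidAlgebra ℤ Γ) V)
    (barR : MonoidAlgebra ℤ Γ →+* MonoidAlgebra ℤ Γ)
    (hbarR : ∀ γ : Γ, barR (MonoidAlgebra.of ℤ Γ γ) = MonoidAlgebra.of ℤ Γ γ⁻¹)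
    (bar : V → V)
    (hadd : ∀ x y : V, bar (x + y) = bar x + bar y)
    (hsmul : ∀ (a : MonoidAlgebra ℤ Γ) (v : V), bar (a • v) = barR a • bar v)
    (hinv : ∀ v : V, bar (bar v) = v)
    (hdiag : ∀ i : I, t.repr (bar (t i)) i = 1)
    (htri : ∀ i j : I, t.repr (bar (t i)) j ≠ 0 → j ≤ i) :
    ∃ b : I → V,
      (∀ i : I,
        bar (b i) = b i ∧
        t.repr (b i) i = 1 ∧
        (∀ j : I, t.repr (b i) j ≠ 0 → j ≤ i) ∧
        (∀ j : I, j < i → ∀ γ ∈ (t.repr (b i) j).coeff.support, 1 < γ)) ∧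
      (∀ (i : I) (v : V),
        (bar v = v ∧
         t.repr v i = 1 ∧
         (∀ j : I, t.repr v j ≠ 0 → j ≤ i) ∧
         (∀ j : I, j < i → ∀ γ ∈ (t.repr v j).coeff.support, 1 < γ)) → v = b i) ∧
      ∃ C : Module.Basis I (MonoidAlgebra ℤ Γ) V, ∀ i : I, C i = b i := by
  have := wellFoundedLT_of_finite_Iic hfin
  let β : V →ₛₗ[barR] V := { toFun := bar, map_add' := hadd, map_smul' := hsmul }
  have hβ : t.IsUnitriangular (β ∘ t) := fun i => ⟨hdiag i, htri i⟩
  choose b hb using t.exists_isCanonicalAt hβ hinv (P := posSubring) fun _ =>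
    exists_mem_posSubring_sub_map_eq hbarR
  have hb_unique (i : I) (v : V) (hv : t.IsCanonicalAt β (posSubring (Γ := Γ)) i v) : v = b i :=
    hv.unique hβ (fun _ => eq_zero_of_mem_posSubring_of_map_eq hbarR) (hb i)
  have hb_tri : t.IsUnitriangular b := fun i => (hb i).toIsUnitriangularAt
  refine ⟨b, fun i => ⟨(hb i).map_eq, (hb i).repr_self, (hb i).le_of_repr_ne_zero, (hb i).repr_mem⟩,
    fun i v ⟨h₁, h₂, h₃, h₄⟩ => hb_unique i v ⟨⟨h₂, h₃⟩, h₁, h₄⟩, hb_tri.basis,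
    congrFun hb_tri.coe_basis⟩
end
end
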